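/- arXiv:1701.03806 — 3 statements merged into one kernel-verified Lean document; each statement's English description precedes it below -/
import Mathlib

section
/- For all integers k and l with l > k ≥ 2, one has h(0) > 0 and h(1) < 0, i.e. a0 > 0 and a8 + a7 + a6 + a5 + a4 + a3 + a2 + a1 + a0 < 0. -/
/-- The degree-8 eliminant polynomial `h` (in the variable `x`), obtained via a Gröbner
basis computation, whose roots give the `x12`-values of non-naturally reductive Einstein
metrics on `SO(2k+l)`. -/
def hpoly (k l x : ℝ) : ℝ :=
  l ^ 2 * (k + l) * (2 * k ^ 2 + 2 * k * l + l ^ 2 - l) * x ^ 8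
  - 2 * l ^ 2 * (2 * k + l - 2) * (4 * k ^ 2 + 4 * k * l + l ^ 2 - l) * x ^ 7
  + l * (16 * k ^ 4 + 76 * k ^ 3 * l + 71 * k ^ 2 * l ^ 2 + 22 * k * l ^ 3 + l ^ 4
      - 20 * k ^ 3 - 119 * k ^ 2 * l - 81 * k * l ^ 2 - 16 * l ^ 3 + 8 * k ^ 2
      + 51 * k * l + 19 * l ^ 2 - 4 * l) * x ^ 6
  - 4 * l * (2 * k + l - 2) * (14 * k ^ 3 + 20 * k ^ 2 * l + 5 * k * l ^ 2 - 14 * k ^ 2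
      - 21 * k * l - 4 * l ^ 2 + 4 * k + 4 * l) * x ^ 5
  + (32 * k ^ 5 + 344 * k ^ 4 * l + 368 * k ^ 3 * l ^ 2 + 117 * k ^ 2 * l ^ 3
      + 6 * k * l ^ 4 - 80 * k ^ 4 - 842 * k ^ 3 * l - 686 * k ^ 2 * l ^ 2
      - 168 * k * l ^ 3 - 4 * l ^ 4 + 82 * k ^ 3 + 713 * k ^ 2 * l + 406 * k * l ^ 2
      + 60 * l ^ 3 - 40 * k ^ 2 - 236 * k * l - 76 * l ^ 2 + 8 * k + 20 * l) * x ^ 4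
  - 2 * (2 * k + l - 2) * (48 * k ^ 4 + 124 * k ^ 3 * l + 31 * k ^ 2 * l ^ 2
      - 92 * k ^ 3 - 215 * k ^ 2 * l - 46 * k * l ^ 2 + 64 * k ^ 2 + 110 * k * l
      + 16 * l ^ 2 - 16 * k - 16 * l) * x ^ 3
  + (448 * k ^ 5 + 608 * k ^ 4 * l + 212 * k ^ 3 * l ^ 2 + 9 * k ^ 2 * l ^ 3
      - 1424 * k ^ 4 - 1550 * k ^ 3 * l - 448 * k ^ 2 * l ^ 2 - 12 * k * l ^ 3
      + 1714 * k ^ 3 + 1427 * k ^ 2 * l + 304 * k * l ^ 2 + 4 * l ^ 3 - 956 * k ^ 2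
      - 556 * k * l - 64 * l ^ 2 + 232 * k + 76 * l - 16) * x ^ 2
  - 4 * (k - 1) * (5 * k - 2) * (3 * k - 2) * (2 * k + l - 2) * (4 * k + l - 1) * x
  + 4 * (5 * k - 2) ^ 2 * (k - 1) ^ 2 * (2 * k + l - 1)

/-- for integers `l > k ≥ 2`, one has `h(0) > 0` and `h(1) < 0`. -/
theorem hpoly_sign_at_zero_and_one (k l : ℤ) (hk : 2 ≤ k) (hkl : k < l) :
    0 < hpoly (k : ℝ) (l : ℝ) 0 ∧ hpoly (k : ℝ) (l : ℝ) 1 < 0 := by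
  have hk' : (2:ℝ) ≤ (k:ℝ) := by exact_mod_cast hk
  have hl' : (k:ℝ) < (l:ℝ) := by exact_mod_cast hkl
  have hl1 : (k:ℝ) + 1 ≤ (l:ℝ) := by exact_mod_cast hkl
  set u : ℝ := (k:ℝ) - 2 with hu
  set v : ℝ := (l:ℝ) - (k:ℝ) - 1 with hv
  have hu0 : 0 ≤ u := by simp [hu]; linarith
  have hv0 : 0 ≤ v := by simp [hv]; linarith
  constructor
  · have h0 : hpoly (k:ℝ) (l:ℝ) 0 = 4 * (5*(k:ℝ)-2)^2 * ((k:ℝ)-1)^2 * (2*(k:ℝ)+(l:ℝ)-1) := by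
      simp [hpoly]
    rw [h0]
    have : (0:ℝ) < 2*(k:ℝ)+(l:ℝ)-1 := by linarith
    have h5 : (0:ℝ) < (5*(k:ℝ)-2)^2 := by
      have : (0:ℝ) < 5*(k:ℝ)-2 := by linarith
      positivity
    have h1 : (0:ℝ) < ((k:ℝ)-1)^2 := by
      have : (0:ℝ) < (k:ℝ)-1 := by linarith
      positivity
    exact mul_pos (mul_pos (mul_pos (by norm_num : (0:ℝ) < 4) h5) h1) this
  · have key : hpoly (k:ℝ) (l:ℝ) 1 =
      -(294 + 427*v + 153*v^2 + 21*v^3 + v^4 + 693*u + 946*u*v + 282*u*v^2 + 30*u*v^3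
        + u*v^4 + 579*u^2 + 726*u^2*v + 156*u^2*v^2 + 9*u^2*v^3 + 207*u^3 + 234*u^3*v
        + 27*u^3*v^2 + 27*u^4 + 27*u^4*v) := by
      simp only [hpoly, hu, hv]; ring
    rw [key]
    have : (0:ℝ) < 294 + 427*v + 153*v^2 + 21*v^3 + v^4 + 693*u + 946*u*v + 282*u*v^2
        + 30*u*v^3 + u*v^4 + 579*u^2 + 726*u^2*v + 156*u^2*v^2 + 9*u^2*v^3 + 207*u^3
        + 234*u^3*v + 27*u^3*v^2 + 27*u^4 + 27*u^4*v := by positivity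
    linarith
end

section
/- For all integers k and l with l > k ≥ 2, there exists a real number s with 0 < s < 1 such that h(s) = 0. -/
/-- for integers `l > k ≥ 2`, `h` has a root strictly between `0` and `1`. -/
theorem hpoly_root_in_unit_interval (k l : ℤ) (hk : 2 ≤ k) (hkl : k < l) :
    ∃ s : ℝ, 0 < s ∧ s < 1 ∧ hpoly (k : ℝ) (l : ℝ) s = 0 := by

  have hk' : (2:ℝ) ≤ (k:ℝ) := by exact_mod_cast hk
  have hkl' : (k:ℝ) < (l:ℝ) := by exact_mod_cast hkl
  set K := (k:ℝ)
  set L := (l:ℝ)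
  have h0 : 0 < hpoly K L 0 := by
    have e0 : hpoly K L 0 = 4 * (5*K-2)^2 * (K-1)^2 * (2*K+L-1) := by
      unfold hpoly; ring
    rw [e0]
    have h1 : (0:ℝ) < (5*K-2)^2 := by nlinarith
    have h2 : (0:ℝ) < (K-1)^2 := by nlinarith
    nlinarith [sq_nonneg (5*K-2), sq_nonneg (K-1), mul_pos h1 h2]
  have h1 : hpoly K L 1 < 0 := by
    have e1 : hpoly K L 1 =
        -((L-K) * (K-1) * (L^3 + (6*K-1)*L^2 + 4*K*(3*K-1)*L + 4*K^2*(2*K-1))) := by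
      unfold hpoly; ring
    rw [e1]
    have f1 : (0:ℝ) < L - K := by linarith
    have f2 : (0:ℝ) < K - 1 := by linarith
    have hL : (0:ℝ) < L := by linarith
    have f3 : (0:ℝ) < L^3 + (6*K-1)*L^2 + 4*K*(3*K-1)*L + 4*K^2*(2*K-1) := by
      nlinarith [pow_pos hL 3, sq_nonneg L, mul_pos hL hL, sq_nonneg K]
    nlinarith [mul_pos (mul_pos f1 f2) f3]
  have hc : ContinuousOn (fun x => hpoly K L x) (Set.Icc 0 1) := by
    apply Continuous.continuousOn
    unfold hpoly
    continuity
  have hsub := intermediate_value_Ioo' (le_of_lt one_pos) hc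
  have hmem : (0:ℝ) ∈ Set.Ioo (hpoly K L 1) (hpoly K L 0) := ⟨h1, h0⟩
  obtain ⟨s, hs, hfs⟩ := hsub hmem
  exact ⟨s, hs.1, hs.2, hfs⟩
end

section
/- For all integers k and l with l > k ≥ 2, there exists a real number s with s > 1 such that h(s) = 0. -/
open Polynomial Filter in
/-- Auxiliary: an explicit degree-8 polynomial from its coefficients. -/
noncomputable def octP (c8 c7 c6 c5 c4 c3 c2 c1 c0 : ℝ) : Polynomial ℝ :=
  C c8 * X ^ 8 + C c7 * X ^ 7 + C c6 * X ^ 6 + C c5 * X ^ 5 + C c4 * X ^ 4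
    + C c3 * X ^ 3 + C c2 * X ^ 2 + C c1 * X + C c0

open Polynomial in
lemma octP_eval (c8 c7 c6 c5 c4 c3 c2 c1 c0 x : ℝ) :
    (octP c8 c7 c6 c5 c4 c3 c2 c1 c0).eval x
      = c8 * x ^ 8 + c7 * x ^ 7 + c6 * x ^ 6 + c5 * x ^ 5 + c4 * x ^ 4
        + c3 * x ^ 3 + c2 * x ^ 2 + c1 * x + c0 := by
  simp [octP]

open Polynomial in
lemma octP_natDegree (c8 c7 c6 c5 c4 c3 c2 c1 c0 : ℝ) (h : c8 ≠ 0) :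
    (octP c8 c7 c6 c5 c4 c3 c2 c1 c0).natDegree = 8 := by
  unfold octP
  compute_degree!

open Polynomial in
lemma octP_coeff8 (c8 c7 c6 c5 c4 c3 c2 c1 c0 : ℝ) :
    (octP c8 c7 c6 c5 c4 c3 c2 c1 c0).coeff 8 = c8 := by
  unfold octP
  simp [coeff_add, coeff_C_mul, coeff_X_pow, coeff_C, coeff_X]

open Polynomial Filter in
lemma octP_tendsto (c8 c7 c6 c5 c4 c3 c2 c1 c0 : ℝ) (h : 0 < c8) :
    Tendsto (fun x : ℝ => (octP c8 c7 c6 c5 c4 c3 c2 c1 c0).eval x) atTop atTop := by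
  have hdeg : (octP c8 c7 c6 c5 c4 c3 c2 c1 c0).natDegree = 8 :=
    octP_natDegree _ _ _ _ _ _ _ _ _ h.ne'
  have hlc : (octP c8 c7 c6 c5 c4 c3 c2 c1 c0).leadingCoeff = c8 := by
    rw [Polynomial.leadingCoeff, hdeg, octP_coeff8]
  apply Polynomial.tendsto_atTop_of_leadingCoeff_nonneg
  · rw [degree_eq_natDegree (fun hz => by simp [hz] at hdeg), hdeg]
    norm_num
  · rw [hlc]; exact h.le

/-- for integers `l > k ≥ 2`, `h` has a root strictly greater than `1`. -/
theorem hpoly_root_gt_one (k l : ℤ) (hk : 2 ≤ k) (hkl : k < l) :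
    ∃ s : ℝ, 1 < s ∧ hpoly (k : ℝ) (l : ℝ) s = 0 := by
  have hk' : (2 : ℝ) ≤ (k : ℝ) := by exact_mod_cast hk
  have hkl' : (k : ℝ) < (l : ℝ) := by exact_mod_cast hkl
  set K : ℝ := (k : ℝ) with hK
  set L : ℝ := (l : ℝ) with hLdef
  have hL : (3 : ℝ) ≤ L := by
    have h1 : k + 1 ≤ l := hkl
    have h2 : ((k : ℤ) : ℝ) + 1 ≤ ((l : ℤ) : ℝ) := by exact_mod_cast h1
    linarith
  set P : Polynomial ℝ := octP
    (L ^ 2 * (K + L) * (2 * K ^ 2 + 2 * K * L + L ^ 2 - L))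
    (- (2 * L ^ 2 * (2 * K + L - 2) * (4 * K ^ 2 + 4 * K * L + L ^ 2 - L)))
    (L * (16 * K ^ 4 + 76 * K ^ 3 * L + 71 * K ^ 2 * L ^ 2 + 22 * K * L ^ 3 + L ^ 4
      - 20 * K ^ 3 - 119 * K ^ 2 * L - 81 * K * L ^ 2 - 16 * L ^ 3 + 8 * K ^ 2
      + 51 * K * L + 19 * L ^ 2 - 4 * L))
    (- (4 * L * (2 * K + L - 2) * (14 * K ^ 3 + 20 * K ^ 2 * L + 5 * K * L ^ 2 - 14 * K ^ 2
      - 21 * K * L - 4 * L ^ 2 + 4 * K + 4 * L)))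
    (32 * K ^ 5 + 344 * K ^ 4 * L + 368 * K ^ 3 * L ^ 2 + 117 * K ^ 2 * L ^ 3
      + 6 * K * L ^ 4 - 80 * K ^ 4 - 842 * K ^ 3 * L - 686 * K ^ 2 * L ^ 2
      - 168 * K * L ^ 3 - 4 * L ^ 4 + 82 * K ^ 3 + 713 * K ^ 2 * L + 406 * K * L ^ 2
      + 60 * L ^ 3 - 40 * K ^ 2 - 236 * K * L - 76 * L ^ 2 + 8 * K + 20 * L)
    (- (2 * (2 * K + L - 2) * (48 * K ^ 4 + 124 * K ^ 3 * L + 31 * K ^ 2 * L ^ 2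
      - 92 * K ^ 3 - 215 * K ^ 2 * L - 46 * K * L ^ 2 + 64 * K ^ 2 + 110 * K * L
      + 16 * L ^ 2 - 16 * K - 16 * L)))
    (448 * K ^ 5 + 608 * K ^ 4 * L + 212 * K ^ 3 * L ^ 2 + 9 * K ^ 2 * L ^ 3
      - 1424 * K ^ 4 - 1550 * K ^ 3 * L - 448 * K ^ 2 * L ^ 2 - 12 * K * L ^ 3
      + 1714 * K ^ 3 + 1427 * K ^ 2 * L + 304 * K * L ^ 2 + 4 * L ^ 3 - 956 * K ^ 2
      - 556 * K * L - 64 * L ^ 2 + 232 * K + 76 * L - 16)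
    (- (4 * (K - 1) * (5 * K - 2) * (3 * K - 2) * (2 * K + L - 2) * (4 * K + L - 1)))
    (4 * (5 * K - 2) ^ 2 * (K - 1) ^ 2 * (2 * K + L - 1)) with hP
  have heval : ∀ x : ℝ, P.eval x = hpoly K L x := by
    intro x
    rw [hP, octP_eval]
    unfold hpoly
    ring
  -- value at 1 is negative
  have hone : hpoly K L 1 = -((K - 1) * (L - K) * (L + 2 * K) ^ 2 * (L + 2 * K - 1)) := by
    unfold hpoly; ring
  have h1neg : hpoly K L 1 < 0 := by
    rw [hone, neg_lt_zero]
    have h1 : 0 < K - 1 := by linarith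
    have h2 : 0 < L - K := by linarith
    have h3 : 0 < (L + 2 * K) ^ 2 := by positivity
    have h4 : 0 < L + 2 * K - 1 := by linarith
    exact mul_pos (mul_pos (mul_pos h1 h2) h3) h4
  -- leading coefficient is positive
  have hlead : 0 < L ^ 2 * (K + L) * (2 * K ^ 2 + 2 * K * L + L ^ 2 - L) := by
    have hA : 0 < L ^ 2 * (K + L) := by positivity
    have hB : 0 < 2 * K ^ 2 + 2 * K * L + L ^ 2 - L := by nlinarith
    exact mul_pos hA hB
  have htend : Filter.Tendsto (fun x : ℝ => P.eval x) Filter.atTop Filter.atTop := by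
    rw [hP]; exact octP_tendsto _ _ _ _ _ _ _ _ _ hlead
  obtain ⟨b, hb0, hb1⟩ :=
    ((htend.eventually (Filter.eventually_gt_atTop 0)).and
      (Filter.eventually_gt_atTop (1 : ℝ))).exists
  have hbpos : 0 < hpoly K L b := by rw [← heval]; exact hb0
  -- IVT on [1, b]
  have hcont : ContinuousOn (fun x => hpoly K L x) (Set.Icc 1 b) := by
    refine (P.continuous.continuousOn).congr ?_
    intro x _
    exact (heval x).symm
  have hmem : (0 : ℝ) ∈ Set.Icc (hpoly K L 1) (hpoly K L b) := ⟨h1neg.le, hbpos.le⟩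
  obtain ⟨s, hs, hfs⟩ := intermediate_value_Icc hb1.le hcont hmem
  have hfs' : hpoly K L s = 0 := hfs
  have hne : (1 : ℝ) ≠ s := fun hse => by
    rw [← hse] at hfs'
    exact absurd hfs' h1neg.ne
  exact ⟨s, hs.1.lt_of_ne hne, hfs'⟩
end
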